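/- (State error bound for pH-OpInf-ROM without hyper-reduction.) Let T > 0, let Φ ∈ ℝⁿˣʳ have orthonormal columns (ΦᵀΦ = I_r), let H: ℝⁿ → ℝ be continuously differentiable with ∇H Lipschitz continuous with constant C_Lip[∇H], and let D_r ∈ ℝʳˣʳ, B_r ∈ ℝʳˣᵐ. Let x: [0,T] → ℝⁿ be continuously differentiable, u: [0,T] → ℝᵐ continuous, d: [0,T] → ℝⁿ continuous, and let x_r: [0,T] → ℝʳ be continuously differentiable with ẋ_r(t) = D_r Φᵀ∇H(Φ x_r(t)) + B_r u(t) and x_r(0) = Φᵀ x(0). Define C₇ := C_logLip[x ↦ Φ D_r Φᵀ∇H(x)], C₈ := ‖D_rΦᵀ‖·C_Lip[∇H], α(T) := 3∫₀ᵀ e^{2C₇(T−τ)} dτ, and Ĉ(T) := max{1 + C₈²·T·α(T), T·α(T)}. Then ∫₀ᵀ ‖x(t) − Φx_r(t)‖² dt ≤ Ĉ(T)·( ∫₀ᵀ ‖x(t) − ΦΦᵀx(t)‖² dt + ∫₀ᵀ ‖ẋ(t) − d(t)‖² dt + ∫₀ᵀ ‖Φᵀd(t) − D_rΦᵀ∇H(x(t))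 − B_r u(t)‖² dt ). -/

import Mathlib

/-!
Split the error orthogonally as `x - Φ x_r = (x - ΦΦᵀx) + z` with `z = Φ(Φᵀx - x_r)`, so only
`∫ ‖z‖²` has to be estimated. Along the trajectories, `ż` is the increment of the lifted drift
`f = Φ D_r Φᵀ ∇H` between `ΦΦᵀx` and `Φx_r`, plus a defect of norm at most
`g = ‖ẋ - d‖ + ‖Φᵀd - D_rΦᵀ∇H(x) - B_r u‖ + C₈ ‖x - ΦΦᵀx‖`; the logarithmic Lipschitz constant of
`f` then gives `⟪z, ż⟫ ≤ C₇ ‖z‖² + ‖z‖ g`. A Grönwall argument for `‖z‖` itself (not `‖z‖²`)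
yields `‖z t‖ ≤ ∫₀ᵗ e^{C₇(t-s)} g s ds` since `z 0 = 0`, and Cauchy–Schwarz turns this into
`‖z t‖² ≤ (α/3) ∫₀ᵀ g²`, with `g² ≤ 3 (‖ẋ - d‖² + ‖Φᵀd - …‖² + C₈² ‖x - ΦΦᵀx‖²)`.
-/

open Matrix MeasureTheory RealInnerProductSpace

noncomputable section

/-- Euclidean space `ℝⁿ`. -/
abbrev Evec (n : ℕ) := EuclideanSpace ℝ (Fin n)

/-- Matrix-vector product on Euclidean spaces. -/
def mv {a b : ℕ} (M : Matrix (Fin a) (Fin b) ℝ) (v : Evec b) : Evec a := WithLp.toLp 2 (M.mulVec v)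

/-- Spectral (operator) norm of a real matrix, viewed as a linear map between
Euclidean spaces. -/
def spec {a b : ℕ} (M : Matrix (Fin a) (Fin b) ℝ) : ℝ :=
  ‖LinearMap.toContinuousLinearMap (Matrix.toEuclideanLin M)‖

/-- The set of quotients defining the logarithmic Lipschitz constant
`C_logLip[f] = sup_{u ≠ v} ⟪u − v, f(u) − f(v)⟫ / ‖u − v‖²`. -/
def logLipSet {a : ℕ} (f : Evec a → Evec a) : Set ℝ :=
  {s : ℝ | ∃ u v : Evec a, u ≠ v ∧ s = ⟪u - v, f u - f v⟫ / ‖u - v‖ ^ 2}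

open Set

section MatrixVector
variable {a b c : ℕ}

theorem mv_add (M : Matrix (Fin a) (Fin b) ℝ) (v w : Evec b) : mv M (v + w) = mv M v + mv M w :=
  map_add (Matrix.toEuclideanLin M) v w

theorem mv_sub (M : Matrix (Fin a) (Fin b) ℝ) (v w : Evec b) : mv M (v - w) = mv M v - mv M w :=
  map_sub (Matrix.toEuclideanLin M) v w

theorem mv_zero (M : Matrix (Fin a) (Fin b) ℝ) : mv M 0 = 0 :=
  map_zero (Matrix.toEuclideanLin M)

theorem mv_one (v : Evec a) : mv 1 v = v := by
  simp [mv]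

theorem mv_mul (M : Matrix (Fin a) (Fin b) ℝ) (N : Matrix (Fin b) (Fin c) ℝ) (v : Evec c) :
    mv (M * N) v = mv M (mv N v) := by
  simp [mv, Matrix.mulVec_mulVec]

theorem norm_mv_le (M : Matrix (Fin a) (Fin b) ℝ) (v : Evec b) : ‖mv M v‖ ≤ spec M * ‖v‖ :=
  (LinearMap.toContinuousLinearMap (Matrix.toEuclideanLin M)).le_opNorm v

@[fun_prop]
theorem continuous_mv (M : Matrix (Fin a) (Fin b) ℝ) : Continuous (mv M) :=
  (LinearMap.toContinuousLinearMap (Matrix.toEuclideanLin M)).continuous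

theorem HasDerivAt.mv (M : Matrix (Fin a) (Fin b) ℝ) {f : ℝ → Evec b} {f' : Evec b} {t : ℝ}
    (h : HasDerivAt f f' t) : HasDerivAt (fun s => mv M (f s)) (mv M f') t :=
  (LinearMap.toContinuousLinearMap (Matrix.toEuclideanLin M)).hasFDerivAt.comp_hasDerivAt t h

theorem inner_mv_left (M : Matrix (Fin a) (Fin b) ℝ) (u : Evec b) (v : Evec a) :
    ⟪mv M u, v⟫ = ⟪u, mv Mᵀ v⟫ := by
  simp only [mv, EuclideanSpace.inner_eq_star_dotProduct]
  simp [Matrix.dotProduct_mulVec, Matrix.vecMul_transpose, dotProduct_comm]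

end MatrixVector

section OrthonormalColumns
variable {n r : ℕ} {Φ : Matrix (Fin n) (Fin r) ℝ}

theorem mv_transpose_mv (hΦ : Φᵀ * Φ = 1) (v : Evec r) : mv Φᵀ (mv Φ v) = v := by
  rw [← mv_mul, hΦ, mv_one]

theorem inner_mv_mv (hΦ : Φᵀ * Φ = 1) (v w : Evec r) : ⟪mv Φ v, mv Φ w⟫ = ⟪v, w⟫ := by
  rw [inner_mv_left, mv_transpose_mv hΦ]

theorem norm_mv_of_transpose_mul_self (hΦ : Φᵀ * Φ = 1) (v : Evec r) : ‖mv Φ v‖ = ‖v‖ := by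
  rw [norm_eq_sqrt_real_inner, norm_eq_sqrt_real_inner, inner_mv_mv hΦ]

theorem inner_sub_proj_mv (hΦ : Φᵀ * Φ = 1) (v : Evec n) (w : Evec r) :
    ⟪v - mv Φ (mv Φᵀ v), mv Φ w⟫ = 0 := by
  rw [real_inner_comm, inner_mv_left, mv_sub, mv_transpose_mv hΦ, sub_self, inner_zero_right]

theorem norm_sub_mv_sq (hΦ : Φᵀ * Φ = 1) (v : Evec n) (w : Evec r) :
    ‖v - mv Φ w‖ ^ 2 = ‖v - mv Φ (mv Φᵀ v)‖ ^ 2 + ‖mv Φ (mv Φᵀ v) - mv Φ w‖ ^ 2 := by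
  have hsplit : v - mv Φ w = (v - mv Φ (mv Φᵀ v)) + mv Φ (mv Φᵀ v - w) := by
    rw [mv_sub]; abel
  rw [hsplit, norm_add_sq_real, inner_sub_proj_mv hΦ, mv_sub]
  ring

theorem integral_norm_sub_mv_sq (hΦ : Φᵀ * Φ = 1) {x : ℝ → Evec n} {xr : ℝ → Evec r} {a b : ℝ}
    (hab : a ≤ b) (hx : ContinuousOn x (Icc a b)) (hxr : ContinuousOn xr (Icc a b)) :
    ∫ t in a..b, ‖x t - mv Φ (xr t)‖ ^ 2 = (∫ t in a..b, ‖x t - mv Φ (mv Φᵀ (x t))‖ ^ 2)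
      + ∫ t in a..b, ‖mv Φ (mv Φᵀ (x t)) - mv Φ (xr t)‖ ^ 2 := by
  rw [← intervalIntegral.integral_add (ContinuousOn.intervalIntegrable_of_Icc hab (by fun_prop))
    (ContinuousOn.intervalIntegrable_of_Icc hab (by fun_prop))]
  exact intervalIntegral.integral_congr fun t _ => norm_sub_mv_sq hΦ (x t) (xr t)

theorem norm_mv_transpose_le (hΦ : Φᵀ * Φ = 1) (v : Evec n) : ‖mv Φᵀ v‖ ≤ ‖v‖ := by
  have h := norm_sub_mv_sq hΦ v 0
  rw [mv_zero, sub_zero, sub_zero, norm_mv_of_transpose_mul_self hΦ] at h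
  exact le_of_sq_le_sq (by linarith [sq_nonneg ‖v - mv Φ (mv Φᵀ v)‖]) (norm_nonneg v)

end OrthonormalColumns

theorem inner_sub_le_sSup_logLipSet {a : ℕ} {f : Evec a → Evec a} (hf : BddAbove (logLipSet f))
    (u v : Evec a) : ⟪u - v, f u - f v⟫ ≤ sSup (logLipSet f) * ‖u - v‖ ^ 2 := by
  rcases eq_or_ne u v with rfl | huv
  · simp
  have hpos : 0 < ‖u - v‖ ^ 2 := by positivity [sub_ne_zero.mpr huv]
  rw [← div_le_iff₀ hpos]
  exact le_csSup hf ⟨u, v, huv, rfl⟩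

theorem sq_integral_mul_le_integral_sq_mul_integral_sq {α : Type*} [MeasurableSpace α]
    {μ : Measure α} {f g : α → ℝ} (hf : Integrable (fun x => f x ^ 2) μ)
    (hg : Integrable (fun x => g x ^ 2) μ) (hfg : Integrable (fun x => f x * g x) μ) :
    (∫ x, f x * g x ∂μ) ^ 2 ≤ (∫ x, f x ^ 2 ∂μ) * ∫ x, g x ^ 2 ∂μ := by
  have hquad : ∀ s : ℝ, 0 ≤ (∫ x, f x ^ 2 ∂μ) * (s * s) + (-2 * ∫ x, f x * g x ∂μ) * s
      + ∫ x, g x ^ 2 ∂μ := fun s => by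
    have hexpand : ∫ x, (s * f x - g x) ^ 2 ∂μ = (∫ x, f x ^ 2 ∂μ) * (s * s)
        + (-2 * ∫ x, f x * g x ∂μ) * s + ∫ x, g x ^ 2 ∂μ := by
      have hpt : (fun x => (s * f x - g x) ^ 2)
          = fun x => (s * s) * f x ^ 2 + (-2 * s) * (f x * g x) + g x ^ 2 := by
        ext x; ring
      rw [hpt, integral_add, integral_add, integral_const_mul, integral_const_mul]
      · ring
      · exact hf.const_mul _
      · exact hfg.const_mul _
      · exact (hf.const_mul _).add (hfg.const_mul _)
      · exact hg
    exact hexpand ▸ integral_nonneg fun x => sq_nonneg _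
  have := discrim_le_zero hquad
  rw [discrim] at this
  linarith

theorem integral_exp_mul_sub_le {k a t b : ℝ} (hat : a ≤ t) (htb : t ≤ b) :
    ∫ s in a..t, Real.exp (k * (t - s)) ≤ ∫ s in a..b, Real.exp (k * (b - s)) := by
  simp only [intervalIntegral.integral_comp_sub_left (fun s => Real.exp (k * s)), sub_self]
  exact intervalIntegral.integral_mono_interval le_rfl (by linarith) (by linarith)
    (Filter.Eventually.of_forall fun s => (Real.exp_pos _).le)
    ((Real.continuous_exp.comp (continuous_const_mul k)).intervalIntegrable _ _)

theorem integral_add_add_sq_le {f₁ f₂ f₃ : ℝ → ℝ} {a b : ℝ} (hab : a ≤ b)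
    (h₁ : ContinuousOn f₁ (Icc a b)) (h₂ : ContinuousOn f₂ (Icc a b))
    (h₃ : ContinuousOn f₃ (Icc a b)) :
    ∫ t in a..b, (f₁ t + f₂ t + f₃ t) ^ 2
      ≤ 3 * ((∫ t in a..b, f₁ t ^ 2) + (∫ t in a..b, f₂ t ^ 2) + ∫ t in a..b, f₃ t ^ 2) := by
  have hint : ∀ {F : ℝ → ℝ}, ContinuousOn F (Icc a b) → IntervalIntegrable F volume a b :=
    fun hF => hF.intervalIntegrable_of_Icc hab
  have hi₁ : IntervalIntegrable (fun t => f₁ t ^ 2) volume a b := hint (h₁.pow 2)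
  have hi₂ : IntervalIntegrable (fun t => f₂ t ^ 2) volume a b := hint (h₂.pow 2)
  have hi₃ : IntervalIntegrable (fun t => f₃ t ^ 2) volume a b := hint (h₃.pow 2)
  rw [← intervalIntegral.integral_add hi₁ hi₂, ← intervalIntegral.integral_add (hi₁.add hi₂) hi₃,
    ← intervalIntegral.integral_const_mul]
  refine intervalIntegral.integral_mono_on hab (hint (((h₁.add h₂).add h₃).pow 2))
    (((hi₁.add hi₂).add hi₃).const_mul 3) fun t _ => ?_
  nlinarith [sq_nonneg (f₁ t - f₂ t), sq_nonneg (f₂ t - f₃ t), sq_nonneg (f₁ t - f₃ t)]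

section Gronwall
variable {E : Type*} [NormedAddCommGroup E] [InnerProductSpace ℝ E]

theorem norm_le_add_integral_of_inner_deriv_le {w w' : ℝ → E} {h : ℝ → ℝ} {a b : ℝ}
    (hab : a ≤ b) (hwc : ContinuousOn w (Icc a b)) (hw : ∀ t ∈ Ioo a b, HasDerivAt w (w' t) t)
    (hh : IntegrableOn h (Icc a b)) (hh0 : ∀ t ∈ Ioo a b, 0 ≤ h t)
    (hle : ∀ t ∈ Ioo a b, ⟪w t, w' t⟫ ≤ ‖w t‖ * h t) :
    ‖w b‖ ≤ ‖w a‖ + ∫ t in a..b, h t := by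
  refine le_of_forall_pos_le_add fun ε hε => ?_
  -- `‖w‖` need not be differentiable where `w` vanishes, so regularize it.
  set v : ℝ → ℝ := fun t => √(‖w t‖ ^ 2 + ε ^ 2)
  have hv_pos : ∀ t, 0 < ‖w t‖ ^ 2 + ε ^ 2 := fun t => by positivity
  have hnorm_le_v : ∀ t, ‖w t‖ ≤ v t := fun t =>
    Real.le_sqrt_of_sq_le (le_add_of_nonneg_right (sq_nonneg ε))
  have hv_deriv : ∀ t ∈ Ioo a b, HasDerivAt v (2 * ⟪w t, w' t⟫ / (2 * v t)) t := fun t ht =>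
    ((hw t ht).norm_sq.add_const _).sqrt (hv_pos t).ne'
  have hv_diff : v b - v a ≤ ∫ t in a..b, h t := by
    refine intervalIntegral.sub_le_integral_of_hasDeriv_right_of_le hab
      ((hwc.norm.pow 2).add continuousOn_const).sqrt
      (fun t ht => (hv_deriv t ht).hasDerivWithinAt) hh fun t ht => ?_
    rw [div_le_iff₀ (by have := Real.sqrt_pos.2 (hv_pos t); positivity)]
    nlinarith [hle t ht, hh0 t ht, hnorm_le_v t]
  have hva : v a ≤ ‖w a‖ + ε :=
    Real.sqrt_le_iff.2 ⟨by positivity, by nlinarith [norm_nonneg (w a)]⟩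
  linarith [hnorm_le_v b]

variable {z z' : ℝ → E} {g : ℝ → ℝ} {c a b : ℝ}

theorem norm_le_exp_mul_add_integral_of_inner_deriv_le (hab : a ≤ b)
    (hzc : ContinuousOn z (Icc a b)) (hz : ∀ t ∈ Ioo a b, HasDerivAt z (z' t) t)
    (hg : IntegrableOn g (Icc a b)) (hg0 : ∀ t ∈ Ioo a b, 0 ≤ g t)
    (hle : ∀ t ∈ Ioo a b, ⟪z t, z' t⟫ ≤ c * ‖z t‖ ^ 2 + ‖z t‖ * g t) :
    ‖z b‖ ≤ Real.exp (c * (b - a)) * ‖z a‖ + ∫ t in a..b, Real.exp (c * (b - t)) * g t := by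
  have hexp_deriv : ∀ t, HasDerivAt (fun s => Real.exp (-c * s)) (-c * Real.exp (-c * t)) t :=
    fun t => by simpa [mul_comm] using ((hasDerivAt_id t).const_mul (-c)).exp
  have hweighted := norm_le_add_integral_of_inner_deriv_le (w := fun t => Real.exp (-c * t) • z t)
    (h := fun t => Real.exp (-c * t) * g t) hab
    ((Real.continuous_exp.comp (continuous_const_mul (-c))).continuousOn.smul hzc)
    (fun t ht => (hexp_deriv t).smul (hz t ht))
    (hg.continuousOn_mul (Real.continuous_exp.comp (continuous_const_mul (-c))).continuousOn
      isCompact_Icc)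
    (fun t ht => by have := hg0 t ht; positivity)
    (fun t ht => by
      simp only [inner_add_right, inner_smul_left, inner_smul_right, real_inner_self_eq_norm_sq,
        norm_smul, Real.norm_eq_abs, abs_of_pos (Real.exp_pos _), RCLike.conj_to_real]
      nlinarith [mul_le_mul_of_nonneg_left (hle t ht) (sq_nonneg (Real.exp (-c * t)))])
  simp only [norm_smul, Real.norm_eq_abs, abs_of_pos (Real.exp_pos _)] at hweighted
  have hexp_split : ∀ t, Real.exp (c * (b - t)) = Real.exp (c * b) * Real.exp (-c * t) :=
    fun t => by rw [← Real.exp_add]; ring_nf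
  calc ‖z b‖ = Real.exp (c * b) * (Real.exp (-c * b) * ‖z b‖) := by
        rw [← mul_assoc, ← hexp_split, sub_self, mul_zero, Real.exp_zero, one_mul]
    _ ≤ Real.exp (c * b) * (Real.exp (-c * a) * ‖z a‖ + ∫ t in a..b, Real.exp (-c * t) * g t) := by
        gcongr
    _ = _ := by
        simp only [mul_add, hexp_split, ← intervalIntegral.integral_const_mul, mul_assoc]

theorem norm_sq_le_integral_exp_mul_mul_integral_sq (hab : a ≤ b)
    (hz : ∀ t ∈ Icc a b, HasDerivAt z (z' t) t) (hza : z a = 0) (hgc : ContinuousOn g (Icc a b))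
    (hg0 : ∀ t ∈ Icc a b, 0 ≤ g t)
    (hle : ∀ t ∈ Icc a b, ⟪z t, z' t⟫ ≤ c * ‖z t‖ ^ 2 + ‖z t‖ * g t) :
    ‖z b‖ ^ 2 ≤ (∫ t in a..b, Real.exp (2 * c * (b - t))) * ∫ t in a..b, g t ^ 2 := by
  have hgronwall := norm_le_exp_mul_add_integral_of_inner_deriv_le hab
    (fun t ht => (hz t ht).continuousAt.continuousWithinAt)
    (fun t ht => hz t (Ioo_subset_Icc_self ht)) hgc.integrableOn_Icc
    (fun t ht => hg0 t (Ioo_subset_Icc_self ht)) (fun t ht => hle t (Ioo_subset_Icc_self ht))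
  rw [hza, norm_zero, mul_zero, zero_add] at hgronwall
  have hexp_cont : ContinuousOn (fun t => Real.exp (c * (b - t))) (Icc a b) := by fun_prop
  have hintegrable : ∀ {F : ℝ → ℝ}, ContinuousOn F (Icc a b) →
      Integrable F (volume.restrict (Ioc a b)) :=
    fun hF => hF.integrableOn_Icc.mono_set Ioc_subset_Icc_self
  have hcs := sq_integral_mul_le_integral_sq_mul_integral_sq (μ := volume.restrict (Ioc a b))
    (hintegrable (hexp_cont.pow 2)) (hintegrable (hgc.pow 2)) (hintegrable (hexp_cont.mul hgc))
  simp only [← intervalIntegral.integral_of_le hab, ← Real.exp_nat_mul] at hcs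
  calc ‖z b‖ ^ 2 ≤ (∫ t in a..b, Real.exp (c * (b - t)) * g t) ^ 2 :=
        pow_le_pow_left₀ (norm_nonneg _) hgronwall 2
    _ ≤ _ := by simpa only [Nat.cast_ofNat, ← mul_assoc] using hcs

theorem integral_norm_sq_le_of_inner_deriv_le (hab : a ≤ b)
    (hz : ∀ t ∈ Icc a b, HasDerivAt z (z' t) t) (hza : z a = 0) (hgc : ContinuousOn g (Icc a b))
    (hg0 : ∀ t ∈ Icc a b, 0 ≤ g t)
    (hle : ∀ t ∈ Icc a b, ⟪z t, z' t⟫ ≤ c * ‖z t‖ ^ 2 + ‖z t‖ * g t) :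
    ∫ t in a..b, ‖z t‖ ^ 2
      ≤ (b - a) * ((∫ t in a..b, Real.exp (2 * c * (b - t))) * ∫ t in a..b, g t ^ 2) := by
  have hpointwise : ∀ t ∈ Icc a b, ‖z t‖ ^ 2
      ≤ (∫ s in a..b, Real.exp (2 * c * (b - s))) * ∫ s in a..b, g s ^ 2 := by
    intro t ht
    have hsub : Icc a t ⊆ Icc a b := Icc_subset_Icc_right ht.2
    exact (norm_sq_le_integral_exp_mul_mul_integral_sq ht.1 (fun s hs => hz s (hsub hs)) hza
      (hgc.mono hsub) (fun s hs => hg0 s (hsub hs)) (fun s hs => hle s (hsub hs))).trans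
      (mul_le_mul (integral_exp_mul_sub_le ht.1 ht.2)
        (intervalIntegral.integral_mono_interval le_rfl ht.1 ht.2
          (Filter.Eventually.of_forall fun s => sq_nonneg _)
          ((hgc.pow 2).intervalIntegrable_of_Icc hab))
        (intervalIntegral.integral_nonneg ht.1 fun s _ => sq_nonneg _)
        (intervalIntegral.integral_nonneg hab fun s _ => (Real.exp_pos _).le))
  have hzc : ContinuousOn z (Icc a b) := fun t ht => (hz t ht).continuousAt.continuousWithinAt
  refine (intervalIntegral.integral_mono_on (g := fun _ => _) hab
    ((hzc.norm.pow 2).intervalIntegrable_of_Icc hab) intervalIntegrable_const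
    hpointwise).trans_eq ?_
  rw [intervalIntegral.integral_const, smul_eq_mul]

end Gronwall

theorem norm_mv_sub_le_spec_mul {n a : ℕ} {gH : Evec n → Evec n} {CLipH : ℝ}
    (hLipH : ∀ p q : Evec n, ‖gH p - gH q‖ ≤ CLipH * ‖p - q‖) (M : Matrix (Fin a) (Fin n) ℝ)
    (p q : Evec n) : ‖mv M (gH p - gH q)‖ ≤ spec M * CLipH * ‖p - q‖ :=
  calc ‖mv M (gH p - gH q)‖ ≤ spec M * ‖gH p - gH q‖ := norm_mv_le M _
    _ ≤ spec M * (CLipH * ‖p - q‖) := mul_le_mul_of_nonneg_left (hLipH p q) (norm_nonneg _)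
    _ = spec M * CLipH * ‖p - q‖ := (mul_assoc _ _ _).symm

theorem inner_romError_deriv_le {n r m : ℕ} {Φ : Matrix (Fin n) (Fin r) ℝ}
    {Dr : Matrix (Fin r) (Fin r) ℝ} {Br : Matrix (Fin r) (Fin m) ℝ} {gH : Evec n → Evec n}
    {CLipH : ℝ} (hΦ : Φᵀ * Φ = 1)
    (hLipH : ∀ p q : Evec n, ‖gH p - gH q‖ ≤ CLipH * ‖p - q‖)
    (hbdd : BddAbove (logLipSet fun p => mv Φ (mv Dr (mv Φᵀ (gH p)))))
    (x x' d : Evec n) (xr : Evec r) (w : Evec m) :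
    ⟪mv Φ (mv Φᵀ x) - mv Φ xr,
        mv Φ (mv Φᵀ x') - mv Φ (mv Dr (mv Φᵀ (gH (mv Φ xr))) + mv Br w)⟫
      ≤ sSup (logLipSet fun p => mv Φ (mv Dr (mv Φᵀ (gH p))))
          * ‖mv Φ (mv Φᵀ x) - mv Φ xr‖ ^ 2
        + ‖mv Φ (mv Φᵀ x) - mv Φ xr‖ * (‖x' - d‖ + ‖mv Φᵀ d - mv Dr (mv Φᵀ (gH x)) - mv Br w‖
          + spec (Dr * Φᵀ) * CLipH * ‖x - mv Φ (mv Φᵀ x)‖) := by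
  set f : Evec n → Evec n := fun p => mv Φ (mv Dr (mv Φᵀ (gH p)))
  set y := mv Φ (mv Φᵀ x)
  set defect := mv Φ (mv Φᵀ (x' - d)) + mv Φ (mv Φᵀ d - mv Dr (mv Φᵀ (gH x)) - mv Br w)
    + mv Φ (mv (Dr * Φᵀ) (gH x - gH y))
  have hsplit : mv Φ (mv Φᵀ x') - mv Φ (mv Dr (mv Φᵀ (gH (mv Φ xr))) + mv Br w)
      = (f y - f (mv Φ xr)) + defect := by
    simp only [f, defect, mv_add, mv_sub, mv_mul]
    abel
  have hdefect : ‖defect‖ ≤ ‖x' - d‖ + ‖mv Φᵀ d - mv Dr (mv Φᵀ (gH x)) - mv Br w‖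
      + spec (Dr * Φᵀ) * CLipH * ‖x - y‖ := by
    refine (norm_add₃_le).trans (add_le_add_three ?_ ?_ ?_)
    · exact (norm_mv_of_transpose_mul_self hΦ _).trans_le (norm_mv_transpose_le hΦ _)
    · exact (norm_mv_of_transpose_mul_self hΦ _).le
    · exact (norm_mv_of_transpose_mul_self hΦ _).trans_le (norm_mv_sub_le_spec_mul hLipH _ _ _)
  calc _ = ⟪y - mv Φ xr, f y - f (mv Φ xr)⟫ + ⟪y - mv Φ xr, defect⟫ := by
        rw [hsplit, inner_add_right]
    _ ≤ sSup (logLipSet f) * ‖y - mv Φ xr‖ ^ 2 + ‖y - mv Φ xr‖ * ‖defect‖ :=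
        add_le_add (inner_sub_le_sSup_logLipSet hbdd _ _) (real_inner_le_norm _ _)
    _ ≤ _ := by gcongr

theorem state_error_bound_pH_OpInf_ROM_general {n r m : ℕ}
    (T : ℝ) (hT : 0 < T)
    (Φ : Matrix (Fin n) (Fin r) ℝ) (hΦ : Φᵀ * Φ = 1)
    (gH : Evec n → Evec n)
    (hgHc : Continuous gH)
    (CLipH : ℝ) (hLipH : ∀ a b : Evec n, ‖gH a - gH b‖ ≤ CLipH * ‖a - b‖)
    (Dr : Matrix (Fin r) (Fin r) ℝ) (Br : Matrix (Fin r) (Fin m) ℝ)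
    (x x' : ℝ → Evec n)
    (hx : ∀ t ∈ Set.Icc (0 : ℝ) T, HasDerivAt x (x' t) t)
    (hx'c : ContinuousOn x' (Set.Icc (0 : ℝ) T))
    (u : ℝ → Evec m) (hu : ContinuousOn u (Set.Icc (0 : ℝ) T))
    (dfun : ℝ → Evec n) (hdfun : ContinuousOn dfun (Set.Icc (0 : ℝ) T))
    (xr : ℝ → Evec r)
    (hxr : ∀ t ∈ Set.Icc (0 : ℝ) T, HasDerivAt xr
      (mv Dr (mv Φᵀ (gH (mv Φ (xr t)))) + mv Br (u t)) t)
    (hxr0 : xr 0 = mv Φᵀ (x 0))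
    (hbdd : BddAbove (logLipSet fun p => mv Φ (mv Dr (mv Φᵀ (gH p)))))
    (C₇ C₈ α CT : ℝ)
    (hC₇ : C₇ = sSup (logLipSet fun p => mv Φ (mv Dr (mv Φᵀ (gH p)))))
    (hC₈ : C₈ = spec (Dr * Φᵀ) * CLipH)
    (hα : α = 3 * ∫ τ in (0 : ℝ)..T, Real.exp (2 * C₇ * (T - τ)))
    (hCT : CT = max (1 + C₈ ^ 2 * T * α) (T * α)) :
    ∫ t in (0 : ℝ)..T, ‖x t - mv Φ (xr t)‖ ^ 2 ≤
      CT * ((∫ t in (0 : ℝ)..T, ‖x t - mv Φ (mv Φᵀ (x t))‖ ^ 2)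
        + (∫ t in (0 : ℝ)..T, ‖x' t - dfun t‖ ^ 2)
        + (∫ t in (0 : ℝ)..T,
            ‖mv Φᵀ (dfun t) - mv Dr (mv Φᵀ (gH (x t))) - mv Br (u t)‖ ^ 2)) := by
  have hxc : ContinuousOn x (Icc 0 T) := fun t ht => (hx t ht).continuousAt.continuousWithinAt
  have hxrc : ContinuousOn xr (Icc 0 T) := fun t ht => (hxr t ht).continuousAt.continuousWithinAt
  set P := ∫ t in (0 : ℝ)..T, ‖x t - mv Φ (mv Φᵀ (x t))‖ ^ 2
  set D := ∫ t in (0 : ℝ)..T, ‖x' t - dfun t‖ ^ 2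
  set O := ∫ t in (0 : ℝ)..T, ‖mv Φᵀ (dfun t) - mv Dr (mv Φᵀ (gH (x t))) - mv Br (u t)‖ ^ 2
  set J := ∫ τ in (0 : ℝ)..T, Real.exp (2 * C₇ * (T - τ))
  set g : ℝ → ℝ := fun t => ‖x' t - dfun t‖
    + ‖mv Φᵀ (dfun t) - mv Dr (mv Φᵀ (gH (x t))) - mv Br (u t)‖
    + C₈ * ‖x t - mv Φ (mv Φᵀ (x t))‖
  have hreduced : ∫ t in (0 : ℝ)..T, ‖mv Φ (mv Φᵀ (x t)) - mv Φ (xr t)‖ ^ 2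
      ≤ T * (J * ∫ t in (0 : ℝ)..T, g t ^ 2) := by
    simpa only [sub_zero] using integral_norm_sq_le_of_inner_deriv_le (c := C₇) (g := g)
      (z := fun t => mv Φ (mv Φᵀ (x t)) - mv Φ (xr t)) hT.le
      (fun t ht => (((hx t ht).mv Φᵀ).mv Φ).sub ((hxr t ht).mv Φ)) (by simp [hxr0]) (by fun_prop)
      (fun t _ => add_nonneg (by positivity) (hC₈ ▸ (norm_nonneg _).trans
        (norm_mv_sub_le_spec_mul hLipH (Dr * Φᵀ) (x t) (mv Φ (mv Φᵀ (x t))))))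
      (fun t _ => by
        simpa only [g, hC₇, hC₈] using inner_romError_deriv_le hΦ hLipH hbdd _ _ (dfun t) _ _)
  have hsource : ∫ t in (0 : ℝ)..T, g t ^ 2 ≤ 3 * (D + O + C₈ ^ 2 * P) := by
    simpa only [mul_pow, intervalIntegral.integral_const_mul] using
      integral_add_add_sq_le hT.le (f₁ := fun t => ‖x' t - dfun t‖)
        (f₂ := fun t => ‖mv Φᵀ (dfun t) - mv Dr (mv Φᵀ (gH (x t))) - mv Br (u t)‖)
        (f₃ := fun t => C₈ * ‖x t - mv Φ (mv Φᵀ (x t))‖) (by fun_prop) (by fun_prop) (by fun_prop)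
  have hJ : 0 ≤ J := intervalIntegral.integral_nonneg hT.le fun τ _ => (Real.exp_pos _).le
  have hP : 0 ≤ P := intervalIntegral.integral_nonneg hT.le fun t _ => sq_nonneg _
  have hD : 0 ≤ D := intervalIntegral.integral_nonneg hT.le fun t _ => sq_nonneg _
  have hO : 0 ≤ O := intervalIntegral.integral_nonneg hT.le fun t _ => sq_nonneg _
  rw [integral_norm_sub_mv_sq hΦ hT.le hxc hxrc]
  calc _ ≤ P + T * (J * (3 * (D + O + C₈ ^ 2 * P))) := by grw [hreduced, hsource]
    _ = (1 + C₈ ^ 2 * T * α) * P + T * α * D + T * α * O := by rw [hα]; ring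
    _ ≤ CT * P + CT * D + CT * O := by
        rw [hCT]; gcongr <;> first | exact le_max_left _ _ | exact le_max_right _ _
    _ = _ := by ring

/-- State error bound for the pH-OpInf-ROM (no
hyper-reduction): with ROM `ẋ_r = D_r Φᵀ∇H(Φx_r) + B_r u`, `x_r(0) = Φᵀx(0)`,
the squared `L²` state error is bounded by `Ĉ(T)` times the sum of the
projection, data and optimization errors, where the constants involve the
(finite) logarithmic Lipschitz constant `C₇ = C_logLip[x ↦ Φ D_r Φᵀ∇H(x)]`. -/
theorem state_error_bound_pH_OpInf_ROM {n r m : ℕ}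
    (T : ℝ) (hT : 0 < T)
    (Φ : Matrix (Fin n) (Fin r) ℝ) (hΦ : Φᵀ * Φ = 1)
    (H : Evec n → ℝ) (gH : Evec n → Evec n)
    (hgrad : ∀ p, HasGradientAt H (gH p) p) (hgHc : Continuous gH)
    (CLipH : ℝ) (hLipH : ∀ a b : Evec n, ‖gH a - gH b‖ ≤ CLipH * ‖a - b‖)
    (Dr : Matrix (Fin r) (Fin r) ℝ) (Br : Matrix (Fin r) (Fin m) ℝ)
    (x x' : ℝ → Evec n)
    (hx : ∀ t ∈ Set.Icc (0 : ℝ) T, HasDerivAt x (x' t) t)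
    (hx'c : ContinuousOn x' (Set.Icc (0 : ℝ) T))
    (u : ℝ → Evec m) (hu : ContinuousOn u (Set.Icc (0 : ℝ) T))
    (dfun : ℝ → Evec n) (hdfun : ContinuousOn dfun (Set.Icc (0 : ℝ) T))
    (xr : ℝ → Evec r)
    (hxr : ∀ t ∈ Set.Icc (0 : ℝ) T, HasDerivAt xr
      (mv Dr (mv Φᵀ (gH (mv Φ (xr t)))) + mv Br (u t)) t)
    (hxr0 : xr 0 = mv Φᵀ (x 0))
    (hbdd : BddAbove (logLipSet fun p => mv Φ (mv Dr (mv Φᵀ (gH p)))))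
    (C₇ C₈ α CT : ℝ)
    (hC₇ : C₇ = sSup (logLipSet fun p => mv Φ (mv Dr (mv Φᵀ (gH p)))))
    (hC₈ : C₈ = spec (Dr * Φᵀ) * CLipH)
    (hα : α = 3 * ∫ τ in (0 : ℝ)..T, Real.exp (2 * C₇ * (T - τ)))
    (hCT : CT = max (1 + C₈ ^ 2 * T * α) (T * α)) :
    ∫ t in (0 : ℝ)..T, ‖x t - mv Φ (xr t)‖ ^ 2 ≤
      CT * ((∫ t in (0 : ℝ)..T, ‖x t - mv Φ (mv Φᵀ (x t))‖ ^ 2)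
        + (∫ t in (0 : ℝ)..T, ‖x' t - dfun t‖ ^ 2)
        + (∫ t in (0 : ℝ)..T,
            ‖mv Φᵀ (dfun t) - mv Dr (mv Φᵀ (gH (x t))) - mv Br (u t)‖ ^ 2)) :=
  state_error_bound_pH_OpInf_ROM_general T hT Φ hΦ gH hgHc CLipH hLipH Dr Br x x' hx hx'c u hu dfun
    hdfun xr hxr hxr0 hbdd C₇ C₈ α CT hC₇ hC₈ hα hCT
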